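/- arXiv:2412.03559 — 2 statements merged into one kernel-verified Lean document; each statement's English description precedes it below -/
import Mathlib

section
/- Let 0<q<1 be real, let g be a nonzero purely imaginary complex number, let b be a nonzero complex number and c = conj(b), and assume the parameters are such that no factor appearing in a denominator of h_n(g,b,c|q) vanishes. Then for every n ∈ ℤ the squared norm h_n(g,b,c|q) is a positive real number; explicitly, h_n = |(q, bq/conj(b);q)_∞ / (g²q/b, bq/g², bq, q/b;q)_∞|² · (g²q, q/g², g²q/|b|², |b|²q/g²;q)_∞ · ((1−|b|²/g²)/(1−|b|²q^{2n}/g²)) · q^n, where each factor in the second line is positive. -/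
open Complex

/-- The infinite `q`-shifted factorial `(a;q)_∞`. -/
noncomputable def qPochInf (a q : ℂ) : ℂ := ∏' j : ℕ, (1 - a * q ^ j)

/-- The squared norms `h_n(g,b,c|q)`. -/
noncomputable def hnorm (q : ℝ) (g b c : ℂ) (n : ℤ) : ℂ :=
  qPochInf (q : ℂ) (q : ℂ) * qPochInf (q : ℂ) (q : ℂ) * qPochInf (g ^ 2 * (q : ℂ)) (q : ℂ) *
      qPochInf ((q : ℂ) / g ^ 2) (q : ℂ) * qPochInf (g ^ 2 * (q : ℂ) / (b * c)) (q : ℂ) *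
      qPochInf (b * c * (q : ℂ) / g ^ 2) (q : ℂ) * qPochInf (c * (q : ℂ) / b) (q : ℂ) *
      qPochInf (b * (q : ℂ) / c) (q : ℂ) /
    (qPochInf (g ^ 2 * (q : ℂ) / b) (q : ℂ) * qPochInf (b * (q : ℂ) / g ^ 2) (q : ℂ) *
      qPochInf (g ^ 2 * (q : ℂ) / c) (q : ℂ) * qPochInf (c * (q : ℂ) / g ^ 2) (q : ℂ) *
      qPochInf (b * (q : ℂ)) (q : ℂ) * qPochInf ((q : ℂ) / b) (q : ℂ) *
      qPochInf (c * (q : ℂ)) (q : ℂ) * qPochInf ((q : ℂ) / c) (q : ℂ)) *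
  ((1 - b * c / g ^ 2) / (1 - b * c * (q : ℂ) ^ (2 * n) / g ^ 2)) * (q : ℂ) ^ n

/-- The absolute-value-squared factor appearing in the explicit representation of
`h_n`, as a complex number. -/
noncomputable def absFactor (q : ℝ) (g b : ℂ) : ℂ :=
  (((‖(qPochInf (q : ℂ) (q : ℂ) *
      qPochInf (b * (q : ℂ) / (starRingEnd ℂ) b) (q : ℂ) /
    (qPochInf (g ^ 2 * (q : ℂ) / b) (q : ℂ) * qPochInf (b * (q : ℂ) / g ^ 2) (q : ℂ) *
      qPochInf (b * (q : ℂ)) (q : ℂ) * qPochInf ((q : ℂ) / b) (q : ℂ)))‖) ^ 2 : ℝ) : ℂ)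

/-!
Since `g` is purely imaginary, `g²` is a nonpositive real number fixed by conjugation. With
`c = conj b`, conjugation therefore maps the Pochhammer symbols of `h_n` involving `b` onto those
involving `c`, and the two groups combine into `A * conj A = ‖A‖²` with `A = absFactorArg q g b`.
What is left are symbols `(x;q)_∞` at real `x ≤ 0`, whose factors `1 - x qʲ` are all at least `1`, and the ratio
`(1 - |b|²/g²) / (1 - |b|² q^{2n} / g²)` of two reals that are at least `1`.
-/

open scoped ComplexOrder ComplexConjugate

namespace Complex

theorem div_nonpos_of_nonneg_of_nonpos {x z : ℂ} (hx : 0 ≤ x) (hz : z ≤ 0) : x / z ≤ 0 := by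
  obtain ⟨a, ha, rfl⟩ := RCLike.nonneg_iff_exists_ofReal.1 hx
  obtain ⟨b, hb, rfl⟩ := RCLike.nonpos_iff_exists_ofReal.1 hz
  rw [← RCLike.ofReal_div]
  exact RCLike.ofReal_nonpos.2 (_root_.div_nonpos_of_nonneg_of_nonpos ha hb)

theorem div_nonpos_of_nonpos_of_nonneg {x z : ℂ} (hx : x ≤ 0) (hz : 0 ≤ z) : x / z ≤ 0 := by
  obtain ⟨a, ha, rfl⟩ := RCLike.nonpos_iff_exists_ofReal.1 hx
  obtain ⟨b, hb, rfl⟩ := RCLike.nonneg_iff_exists_ofReal.1 hz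
  rw [← RCLike.ofReal_div]
  exact RCLike.ofReal_nonpos.2 (_root_.div_nonpos_of_nonpos_of_nonneg ha hb)

theorem one_sub_div_pos {x z : ℂ} (hx : 0 ≤ x) (hz : z ≤ 0) : 0 < 1 - x / z :=
  sub_pos.2 ((Complex.div_nonpos_of_nonneg_of_nonpos hx hz).trans_lt zero_lt_one)

end Complex

theorem one_sub_mul_pow_pos {x q : ℝ} (hx : x < 1) (hq0 : 0 ≤ q) (hq1 : q ≤ 1) (j : ℕ) :
    0 < 1 - x * q ^ j := by
  have hqj : q ^ j ≤ 1 := pow_le_one₀ hq0 hq1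
  rcases le_or_gt x 0 with hx0 | hx0
  · nlinarith [pow_nonneg hq0 j]
  · nlinarith

theorem qPochInf_ne_zero {a q : ℂ} (hq : ‖q‖ < 1) (h : ∀ j : ℕ, 1 - a * q ^ j ≠ 0) :
    qPochInf a q ≠ 0 := by
  have hsum : Summable fun j : ℕ => ‖-(a * q ^ j)‖ := by
    simpa [norm_mul, norm_pow] using
      (summable_geometric_of_lt_one (norm_nonneg q) hq).mul_left ‖a‖
  simpa only [qPochInf, sub_eq_add_neg] using
    tprod_one_add_ne_zero_of_summable (by simpa only [← sub_eq_add_neg] using h) hsum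

theorem qPochInf_ne_zero_of_norm_lt_one {a q : ℂ} (ha : ‖a‖ < 1) (hq : ‖q‖ < 1) :
    qPochInf a q ≠ 0 := by
  refine qPochInf_ne_zero hq fun j h => ?_
  have : ‖a * q ^ j‖ < 1 := by
    rw [norm_mul, norm_pow]
    exact mul_lt_one_of_nonneg_of_lt_one_left (norm_nonneg a) ha
      (pow_le_one₀ (norm_nonneg q) hq.le)
  rw [← sub_eq_zero.1 h, norm_one] at this
  exact this.false

theorem conj_qPochInf (a q : ℂ) : conj (qPochInf a q) = qPochInf (conj a) (conj q) := by
  rw [qPochInf, isometry_conj.isClosedEmbedding.map_tprod]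
  simp [qPochInf]

theorem qPochInf_ofReal (x q : ℝ) :
    qPochInf x q = ((∏' j : ℕ, (1 - x * q ^ j) : ℝ) : ℂ) := by
  simpa [qPochInf] using
    (isometry_ofReal.isClosedEmbedding.map_tprod (g := ofRealHom) (L := .unconditional ℕ)
      fun j => 1 - x * q ^ j).symm

/-- In `ComplexOrder`, `a < 1` says that `a` is a real number less than `1`. -/
theorem qPochInf_pos {a : ℂ} (ha : a < 1) {q : ℝ} (hq0 : 0 ≤ q) (hq1 : q < 1) :
    0 < qPochInf a q := by
  obtain ⟨x, rfl⟩ : ∃ x : ℝ, (x : ℂ) = a := ⟨a.re, ext rfl (lt_def.1 ha).2.symm⟩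
  have hx : x < 1 := by exact_mod_cast ha
  have hne := qPochInf_ne_zero (a := x) (q := q) (by simpa [abs_of_nonneg hq0] using hq1)
    fun j => by exact_mod_cast (one_sub_mul_pow_pos hx hq0 hq1.le j).ne'
  rw [qPochInf_ofReal] at hne ⊢
  exact zero_lt_real.2 <|
    (tprod_nonneg fun j => (one_sub_mul_pow_pos hx hq0 hq1.le j).le).lt_of_ne
      (by exact_mod_cast hne.symm)

noncomputable def absFactorArg (q : ℝ) (g b : ℂ) : ℂ :=
  qPochInf q q * qPochInf (b * q / conj b) q /
    (qPochInf (g ^ 2 * q / b) q * qPochInf (b * q / g ^ 2) q * qPochInf (b * q) q *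
      qPochInf (q / b) q)

section

variable {q : ℝ} {g b : ℂ}

theorem absFactor_eq_mul_conj :
    absFactor q g b = absFactorArg q g b * conj (absFactorArg q g b) := by
  rw [mul_conj', absFactor, ofReal_pow]
  rfl

theorem conj_absFactorArg (hg : g.re = 0) :
    conj (absFactorArg q g b) =
      qPochInf q q * qPochInf (conj b * q / b) q /
        (qPochInf (g ^ 2 * q / conj b) q * qPochInf (conj b * q / g ^ 2) q *
          qPochInf (conj b * q) q * qPochInf (q / conj b) q) := by
  have hg' : conj g = -g := ext (by simp [hg]) (by simp)
  simp only [absFactorArg, map_div₀, map_mul, map_pow, conj_qPochInf, conj_ofReal, conj_conj, hg',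
    neg_sq]

theorem hnorm_conj_eq (hg : g.re = 0) (n : ℤ) :
    hnorm q g b (conj b) n =
      absFactor q g b *
        (qPochInf (g ^ 2 * q) q * qPochInf (q / g ^ 2) q *
          qPochInf (g ^ 2 * q / (‖b‖ : ℂ) ^ 2) q * qPochInf ((‖b‖ : ℂ) ^ 2 * q / g ^ 2) q) *
        ((1 - (‖b‖ : ℂ) ^ 2 / g ^ 2) /
          (1 - (‖b‖ : ℂ) ^ 2 * (q : ℂ) ^ (2 * n) / g ^ 2)) *
        (q : ℂ) ^ n := by
  rw [absFactor_eq_mul_conj, conj_absFactorArg hg, absFactorArg, hnorm, mul_conj']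
  ring

theorem absFactorArg_ne_zero (hq0 : 0 ≤ q) (hq1 : q < 1)
    (h₁ : qPochInf (g ^ 2 * q / b) q ≠ 0) (h₂ : qPochInf (b * q / g ^ 2) q ≠ 0)
    (h₃ : qPochInf (b * q) q ≠ 0) (h₄ : qPochInf (q / b) q ≠ 0) :
    absFactorArg q g b ≠ 0 := by
  have hq : ‖(q : ℂ)‖ < 1 := by simpa [abs_of_nonneg hq0] using hq1
  have hb : ‖b * q / conj b‖ < 1 := by
    rw [norm_div, norm_mul, norm_conj, mul_div_right_comm]
    exact (mul_le_of_le_one_left (norm_nonneg _) (div_self_le_one _)).trans_lt hq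
  exact div_ne_zero
    (mul_ne_zero (qPochInf_ne_zero_of_norm_lt_one hq hq) (qPochInf_ne_zero_of_norm_lt_one hb hq))
    (by positivity)

theorem hnorm_conj_pos (hq0 : 0 < q) (hq1 : q < 1) (hg : g.re = 0)
    (hb : absFactorArg q g b ≠ 0) (n : ℤ) : 0 < hnorm q g b (conj b) n := by
  have hg2 : g ^ 2 ≤ 0 := sq_nonpos_iff.2 hg
  have hq : 0 ≤ (q : ℂ) := zero_le_real.2 hq0.le
  have hb2 : 0 ≤ (‖b‖ : ℂ) ^ 2 := pow_nonneg (zero_le_real.2 (norm_nonneg b)) 2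
  have hpoch {a : ℂ} (ha : a ≤ 0) : 0 < qPochInf a q :=
    qPochInf_pos (ha.trans_lt zero_lt_one) hq0.le hq1
  have hqn (m : ℤ) : 0 < (q : ℂ) ^ m := by
    rw [← ofReal_zpow]; exact zero_lt_real.2 (zpow_pos hq0 m)
  rw [hnorm_conj_eq hg]
  refine mul_pos (mul_pos (mul_pos ?_ ?_) ?_) (hqn n)
  · rw [absFactor]; exact zero_lt_real.2 (by positivity)
  · refine mul_pos (mul_pos (mul_pos ?_ ?_) ?_) ?_ <;> apply hpoch
    · exact mul_nonpos_of_nonpos_of_nonneg hg2 hq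
    · exact Complex.div_nonpos_of_nonneg_of_nonpos hq hg2
    · exact Complex.div_nonpos_of_nonpos_of_nonneg (mul_nonpos_of_nonpos_of_nonneg hg2 hq) hb2
    · exact Complex.div_nonpos_of_nonneg_of_nonpos (mul_nonneg hb2 hq) hg2
  · exact div_pos (Complex.one_sub_div_pos hb2 hg2)
      (Complex.one_sub_div_pos (mul_nonneg hb2 (hqn _).le) hg2)

end

theorem squared_norm_positive_general (q : ℝ) (hq0 : 0 < q) (hq1 : q < 1)
    (g b c : ℂ) (hgre : g.re = 0) (hc : c = (starRingEnd ℂ) b)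
    (hd3 : qPochInf (g ^ 2 * (q : ℂ) / b) (q : ℂ) ≠ 0 ∧
      qPochInf (b * (q : ℂ) / g ^ 2) (q : ℂ) ≠ 0 ∧
      qPochInf (g ^ 2 * (q : ℂ) / c) (q : ℂ) ≠ 0 ∧
      qPochInf (c * (q : ℂ) / g ^ 2) (q : ℂ) ≠ 0 ∧
      qPochInf (b * (q : ℂ)) (q : ℂ) ≠ 0 ∧ qPochInf ((q : ℂ) / b) (q : ℂ) ≠ 0 ∧
      qPochInf (c * (q : ℂ)) (q : ℂ) ≠ 0 ∧ qPochInf ((q : ℂ) / c) (q : ℂ) ≠ 0) :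
    ∀ n : ℤ,
      (hnorm q g b c n =
        absFactor q g b *
          (qPochInf (g ^ 2 * (q : ℂ)) (q : ℂ) * qPochInf ((q : ℂ) / g ^ 2) (q : ℂ) *
            qPochInf (g ^ 2 * (q : ℂ) / ((‖b‖ : ℂ) ^ 2)) (q : ℂ) *
            qPochInf ((‖b‖ : ℂ) ^ 2 * (q : ℂ) / g ^ 2) (q : ℂ)) *
          ((1 - (‖b‖ : ℂ) ^ 2 / g ^ 2) /
            (1 - (‖b‖ : ℂ) ^ 2 * (q : ℂ) ^ (2 * n) / g ^ 2)) * (q : ℂ) ^ n) ∧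
      ∃ t : ℝ, 0 < t ∧ hnorm q g b c n = (t : ℂ) := by
  subst hc
  obtain ⟨h₁, h₂, -, -, h₃, h₄, -, -⟩ := hd3
  intro n
  refine ⟨hnorm_conj_eq hgre n, ?_⟩
  obtain ⟨t, ht, h⟩ := RCLike.pos_iff_exists_ofReal.1 <|
    hnorm_conj_pos hq0 hq1 hgre (absFactorArg_ne_zero hq0.le hq1 h₁ h₂ h₃ h₄) n
  exact ⟨t, ht, h.symm⟩

/-- The squared norms `h_n(g,b,c|q)` are positive real numbers, with the stated
explicit representation. -/
theorem squared_norm_positive (q : ℝ) (hq0 : 0 < q) (hq1 : q < 1)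
    (g b c : ℂ) (hg : g ≠ 0) (hgre : g.re = 0) (hb : b ≠ 0) (hc : c = (starRingEnd ℂ) b)
    (hd3 : qPochInf (g ^ 2 * (q : ℂ) / b) (q : ℂ) ≠ 0 ∧
      qPochInf (b * (q : ℂ) / g ^ 2) (q : ℂ) ≠ 0 ∧
      qPochInf (g ^ 2 * (q : ℂ) / c) (q : ℂ) ≠ 0 ∧
      qPochInf (c * (q : ℂ) / g ^ 2) (q : ℂ) ≠ 0 ∧
      qPochInf (b * (q : ℂ)) (q : ℂ) ≠ 0 ∧ qPochInf ((q : ℂ) / b) (q : ℂ) ≠ 0 ∧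
      qPochInf (c * (q : ℂ)) (q : ℂ) ≠ 0 ∧ qPochInf ((q : ℂ) / c) (q : ℂ) ≠ 0)
    (hd4 : ∀ m : ℤ, 1 - b * c * (q : ℂ) ^ (2 * m) / g ^ 2 ≠ 0) :
    ∀ n : ℤ,
      (hnorm q g b c n =
        absFactor q g b *
          (qPochInf (g ^ 2 * (q : ℂ)) (q : ℂ) * qPochInf ((q : ℂ) / g ^ 2) (q : ℂ) *
            qPochInf (g ^ 2 * (q : ℂ) / ((‖b‖ : ℂ) ^ 2)) (q : ℂ) *
            qPochInf ((‖b‖ : ℂ) ^ 2 * (q : ℂ) / g ^ 2) (q : ℂ)) *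
          ((1 - (‖b‖ : ℂ) ^ 2 / g ^ 2) /
            (1 - (‖b‖ : ℂ) ^ 2 * (q : ℂ) ^ (2 * n) / g ^ 2)) * (q : ℂ) ^ n) ∧
      ∃ t : ℝ, 0 < t ∧ hnorm q g b c n = (t : ℂ) :=
  squared_norm_positive_general q hq0 hq1 g b c hgre hc hd3
end

section
/- Let 0<q<1 be real, let g be a nonzero purely imaginary complex number, let b be a nonzero complex number and c = conj(b), and assume the parameters are such that no factor appearing in a denominator vanishes. Then for every n ∈ ℤ and every z on the unit circle, F_n(z;g,b,c|q) has the representation F_n(z;g,b,c|q) = ((b, b/g²;q)_n/(cq, cq/g²;q)_n) · (cq/b)^n · ₃ψ₃[gq, bq^n, g²q^{−n}/c ; g, g²q^{1−n}/b, cq^{1+n} ; q, q^{1/2} z], where the bilateral series on the right converges absolutely on |z|=1. -/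
open Complex

/-- The `q`-shifted factorial `(a;q)_k` for integer `k`, given by the
(generically equal) product formulas. -/
noncomputable def qPoch (a q : ℂ) (k : ℤ) : ℂ :=
  if 0 ≤ k then ∏ j ∈ Finset.range k.toNat, (1 - a * q ^ j)
  else (∏ j ∈ Finset.range (-k).toNat, (1 - a * q ^ (-(j : ℤ) - 1)))⁻¹

/-- The coefficients `F_{n,k}(g,b,c|q)`. -/
noncomputable def Fnk (q : ℝ) (g b c : ℂ) (n k : ℤ) : ℂ :=
  (1 - g * (q : ℂ) ^ k) / (1 - g) *
    (qPoch b (q : ℂ) (n + k) * qPoch (g ^ 2 / c) (q : ℂ) (k - n) /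
      (qPoch (c * (q : ℂ)) (q : ℂ) (n + k) * qPoch (g ^ 2 * (q : ℂ) / b) (q : ℂ) (k - n))) *
    ((Real.sqrt q : ℂ)) ^ k

/-- The function `F_n(z; g,b,c|q) = Σ_{k∈ℤ} F_{n,k}(g,b,c|q) z^k`. -/
noncomputable def Fq (q : ℝ) (g b c : ℂ) (n : ℤ) (z : ℂ) : ℂ :=
  ∑' k : ℤ, Fnk q g b c n k * z ^ k

/-- The summand of the well-poised bilateral basic hypergeometric `₃ψ₃` series
`₃ψ₃[gq, bqⁿ, g²q⁻ⁿ/c; g, g²q^{1−n}/b, cq^{1+n}; q, q^{1/2} z]`. -/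
noncomputable def psi3Term (q : ℝ) (g b c : ℂ) (n k : ℤ) (z : ℂ) : ℂ :=
  qPoch (g * (q : ℂ)) (q : ℂ) k * qPoch (b * (q : ℂ) ^ n) (q : ℂ) k *
      qPoch (g ^ 2 * (q : ℂ) ^ (-n) / c) (q : ℂ) k /
    (qPoch g (q : ℂ) k * qPoch (g ^ 2 * (q : ℂ) ^ (1 - n) / b) (q : ℂ) k *
      qPoch (c * (q : ℂ) ^ (1 + n)) (q : ℂ) k) *
    ((Real.sqrt q : ℂ) * z) ^ k

/-! Splitting every `q`-shifted factorial of `F_{n,k}` as `(a;q)_{m+k} = (a;q)_m (aq^m;q)_k`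
with `m = ±n`, and removing `(a;q)_{-n}` with the inversion formula
`(a;q)_{-n} (q/a;q)_n aⁿ = (-1)ⁿ q^{n(n+1)/2}`, turns `F_{n,k} zᵏ` into a constant independent of
`k` times the `k`-th term of the `₃ψ₃` series. Absolute convergence is the ratio test in both
directions: the ratio of consecutive terms tends to `q^{1/2} z` as `k → ∞`, and its inverse tends
to `q (c/b)² / (q^{1/2} z)` as `k → -∞`, both of modulus `q^{1/2}` since `|c| = |b|`.
As `g` is purely imaginary, `g²` is real, so conjugation carries the nonvanishing of the factors
with parameters `c` and `g²/b` over to `b` and `g²/c`. -/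

open Filter Topology Finset

section QPochhammer

variable {a q : ℂ}

lemma qPoch_zero (a q : ℂ) : qPoch a q 0 = 1 := by simp [qPoch]

lemma qPoch_natCast (a q : ℂ) (n : ℕ) : qPoch a q n = ∏ j ∈ range n, (1 - a * q ^ j) := by
  simp [qPoch]

lemma qPoch_neg_natCast_sub_one (a q : ℂ) (n : ℕ) :
    qPoch a q (-n - 1) = qPoch a q (-n) * (1 - a * q ^ (-(n : ℤ) - 1))⁻¹ := by
  have hneg : ¬ (0 ≤ -(n : ℤ) - 1) := by omega
  rcases n with _ | n
  · simp [qPoch]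
  · rw [qPoch, qPoch, if_neg hneg, if_neg (by omega), ← mul_inv,
      show (-(-((n + 1 : ℕ) : ℤ) - 1)).toNat = n + 1 + 1 by omega,
      show (-(-((n + 1 : ℕ) : ℤ))).toNat = n + 1 by omega, prod_range_succ _ (n + 1)]

lemma qPoch_add_one {k : ℤ} (hk : 1 - a * q ^ k ≠ 0) :
    qPoch a q (k + 1) = qPoch a q k * (1 - a * q ^ k) := by
  obtain ⟨n, rfl | rfl⟩ := Int.eq_nat_or_neg k
  · rw [← Nat.cast_succ, qPoch_natCast, qPoch_natCast, prod_range_succ, zpow_natCast]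
  · rcases n with _ | n
    · simp [qPoch]
    · rw [show -((n + 1 : ℕ) : ℤ) = -n - 1 by push_cast; ring] at hk ⊢
      rw [sub_add_cancel, qPoch_neg_natCast_sub_one, inv_mul_cancel_right₀ hk]

def QFactorsNeZero (a q : ℂ) : Prop := ∀ j : ℤ, 1 - a * q ^ j ≠ 0

lemma qPoch_ne_zero_iff : (∀ k, qPoch a q k ≠ 0) ↔ QFactorsNeZero a q := by
  refine ⟨fun h j hj => ?_, fun h k => ?_⟩
  · rcases j with n | n
    · refine h (n + 1) ?_
      rw [Int.ofNat_eq_natCast, zpow_natCast] at hj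
      rw [← Nat.cast_succ, qPoch_natCast, prod_range_succ, hj, mul_zero]
    · rw [Int.negSucc_eq, neg_add'] at hj
      refine h (-n - 1) ?_
      rw [qPoch_neg_natCast_sub_one, hj, inv_zero, mul_zero]
  · rw [qPoch]
    split_ifs
    · exact prod_ne_zero_iff.2 fun j _ => by simpa using h j
    · exact inv_ne_zero (prod_ne_zero_iff.2 fun j _ => h _)

namespace QFactorsNeZero

lemma mul_zpow (h : QFactorsNeZero a q) (hq : q ≠ 0) (m : ℤ) : QFactorsNeZero (a * q ^ m) q :=
  fun j => by rw [mul_assoc, ← zpow_add₀ hq]; exact h _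

lemma of_mul (hq : q ≠ 0) (h : QFactorsNeZero (a * q) q) : QFactorsNeZero a q :=
  fun j => by simpa [mul_assoc, ← zpow_one_add₀ hq] using h (j - 1)

lemma conj {q : ℝ} (h : QFactorsNeZero a q) : QFactorsNeZero (starRingEnd ℂ a) q := fun j hj =>
  h j (by simpa [map_zpow₀] using congrArg (starRingEnd ℂ) hj)

lemma of_mul_eq {a' : ℂ} (h : QFactorsNeZero a q) (hq : q ≠ 0) (ha' : a * a' = q) :
    QFactorsNeZero a' q := fun j hj => h (-j - 1) <| by
  have hexp : q ^ (-j - 1) * q ^ j = q⁻¹ := by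
    rw [← zpow_add₀ hq, show -j - 1 + j = -1 by ring, zpow_neg_one]
  linear_combination (-a * q ^ (-j - 1)) * hj - q ^ (-j - 1) * q ^ j * ha' - q * hexp -
    mul_inv_cancel₀ hq

end QFactorsNeZero

lemma qPoch_add (hq : q ≠ 0) (h : QFactorsNeZero a q) (m l : ℤ) :
    qPoch a q (m + l) = qPoch a q m * qPoch (a * q ^ m) q l := by
  have hshift : ∀ j, a * q ^ m * q ^ j = a * q ^ (m + j) := fun j => by
    rw [mul_assoc, ← zpow_add₀ hq]
  induction l using Int.induction_on with
  | zero => rw [add_zero, qPoch_zero, mul_one]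
  | succ l ih =>
    rw [← add_assoc, qPoch_add_one (h _), ih, qPoch_add_one (h.mul_zpow hq m _), hshift, mul_assoc]
  | pred l ih =>
    have e₁ := qPoch_add_one (h (m + (-l - 1)))
    have e₂ := qPoch_add_one (h.mul_zpow hq m (-l - 1))
    rw [show m + (-l - 1) + 1 = m + -l by ring, ih] at e₁
    rw [sub_add_cancel, hshift] at e₂
    refine mul_right_cancel₀ (h (m + (-l - 1))) ?_
    rw [← e₁, e₂, mul_assoc]

lemma one_sub_mul_qPoch_mul (hq : q ≠ 0) (h : QFactorsNeZero a q) (k : ℤ) :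
    (1 - a) * qPoch (a * q) q k = qPoch a q k * (1 - a * q ^ k) := by
  have h₁ := qPoch_add hq h 1 k
  rw [zpow_one, add_comm, qPoch_add_one (h k)] at h₁
  rw [h₁, show qPoch a q 1 = 1 - a by simp [qPoch]]

lemma qPoch_neg_mul_qPoch_mul_zpow_add_one {a' : ℂ} (hq : q ≠ 0) (h : QFactorsNeZero a q)
    (ha' : a * a' = q) (n : ℤ) :
    qPoch a q (-(n + 1)) * qPoch a' q (n + 1) * a ^ (n + 1) =
      -q ^ (n + 1) * (qPoch a q (-n) * qPoch a' q n * a ^ n) := by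
  have ha : a ≠ 0 := left_ne_zero_of_mul (ha'.symm ▸ hq)
  have e₁ := qPoch_add_one (h (-(n + 1)))
  rw [show -(n + 1) + 1 = -n by ring] at e₁
  have hfactor : (1 - a' * q ^ n) * a = -q ^ (n + 1) * (1 - a * q ^ (-(n + 1))) := by
    have hexp : q ^ (n + 1) * q ^ (-(n + 1)) = 1 := by
      rw [← zpow_add₀ hq, add_neg_cancel, zpow_zero]
    linear_combination (-q ^ n) * ha' - a * hexp + zpow_add_one₀ hq n
  refine mul_right_cancel₀ (h (-(n + 1))) ?_
  rw [qPoch_add_one (h.of_mul_eq hq ha' n), e₁, zpow_add_one₀ ha]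
  linear_combination (qPoch a q (-(n + 1)) * qPoch a' q n * a ^ n * (1 - a * q ^ (-(n + 1)))) *
    hfactor

-- `n * (n + 1)` is even, so the integer division in the exponent is exact.
lemma qPoch_neg_mul_qPoch_mul_zpow {a' : ℂ} (hq : q ≠ 0) (h : QFactorsNeZero a q)
    (ha' : a * a' = q) (n : ℤ) :
    qPoch a q (-n) * qPoch a' q n * a ^ n = (-1) ^ n * q ^ (n * (n + 1) / 2) := by
  have hstep : ∀ n : ℤ, (-1 : ℂ) ^ (n + 1) * q ^ ((n + 1) * (n + 1 + 1) / 2) =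
      -q ^ (n + 1) * ((-1) ^ n * q ^ (n * (n + 1) / 2)) := fun n => by
    rw [show (n + 1) * (n + 1 + 1) = n * (n + 1) + (n + 1) * 2 by ring,
      Int.add_mul_ediv_right _ _ two_ne_zero, zpow_add₀ hq, zpow_add_one₀ (by norm_num)]
    ring
  induction n using Int.induction_on with
  | zero => simp [qPoch_zero]
  | succ n ih => rw [qPoch_neg_mul_qPoch_mul_zpow_add_one hq h ha', ih, hstep]
  | pred n ih =>
    have e := qPoch_neg_mul_qPoch_mul_zpow_add_one hq h ha' (-n - 1)
    have hclosed := hstep (-n - 1)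
    rw [sub_add_cancel] at e hclosed ⊢
    rw [ih, hclosed] at e
    exact (mul_left_cancel₀ (neg_ne_zero.2 (zpow_ne_zero _ hq)) e).symm

lemma qPoch_neg_eq_mul_div {b a' b' : ℂ} (hq : q ≠ 0) (ha : QFactorsNeZero a q)
    (hb : QFactorsNeZero b q) (ha' : a * a' = q) (hb' : b * b' = q) {n : ℤ}
    (hn : qPoch a' q n ≠ 0) :
    qPoch a q (-n) = qPoch b q (-n) * qPoch b' q n * (b / a) ^ n / qPoch a' q n := by
  have ha₀ : a ≠ 0 := left_ne_zero_of_mul (ha'.symm ▸ hq)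
  rw [eq_div_iff hn]
  refine mul_right_cancel₀ (zpow_ne_zero n ha₀) ?_
  rw [qPoch_neg_mul_qPoch_mul_zpow hq ha ha', ← qPoch_neg_mul_qPoch_mul_zpow hq hb hb' n, div_zpow]
  field_simp

end QPochhammer

lemma summable_norm_int_of_ratio_tendsto {E : Type*} [NormedAddCommGroup E] {f : ℤ → E}
    (hf : ∀ k, f k ≠ 0) {l l' : ℝ} (hl : l < 1) (hl' : l' < 1)
    (hpos : Tendsto (fun m : ℕ => ‖f (m + 1)‖ / ‖f m‖) atTop (𝓝 l))
    (hneg : Tendsto (fun m : ℕ => ‖f (-(m + 1))‖ / ‖f (-m)‖) atTop (𝓝 l')) :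
    Summable fun k => ‖f k‖ := by
  have hf' : ∀ k, ‖f k‖ ≠ 0 := fun k => norm_ne_zero_iff.2 (hf k)
  rw [summable_int_iff_summable_nat_and_neg]
  constructor
  · exact summable_of_ratio_test_tendsto_lt_one hl (.of_forall fun m => hf' _) (by simpa using hpos)
  · exact summable_of_ratio_test_tendsto_lt_one hl' (.of_forall fun m => hf' _)
      (by simpa [neg_add] using hneg)

section BilateralSeries

variable {r : ℕ} (a b : Fin r → ℂ) (q w : ℂ)

noncomputable def psiTerm (k : ℤ) : ℂ := (∏ i, qPoch (a i) q k) / (∏ i, qPoch (b i) q k) * w ^ k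

variable {a b q w}

lemma psiTerm_ne_zero (ha : ∀ i, QFactorsNeZero (a i) q) (hb : ∀ i, QFactorsNeZero (b i) q)
    (hw : w ≠ 0) (k : ℤ) : psiTerm a b q w k ≠ 0 :=
  mul_ne_zero (div_ne_zero (prod_ne_zero_iff.2 fun i _ => qPoch_ne_zero_iff.2 (ha i) k)
    (prod_ne_zero_iff.2 fun i _ => qPoch_ne_zero_iff.2 (hb i) k)) (zpow_ne_zero k hw)

lemma psiTerm_add_one (ha : ∀ i, QFactorsNeZero (a i) q) (hb : ∀ i, QFactorsNeZero (b i) q)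
    (hw : w ≠ 0) (k : ℤ) :
    psiTerm a b q w (k + 1) =
      psiTerm a b q w k * ((∏ i, (1 - a i * q ^ k)) / (∏ i, (1 - b i * q ^ k)) * w) := by
  rw [psiTerm, psiTerm, prod_congr rfl fun i _ => qPoch_add_one (ha i k),
    prod_congr rfl fun i _ => qPoch_add_one (hb i k), prod_mul_distrib, prod_mul_distrib,
    zpow_add_one₀ hw]
  ring


lemma tendsto_norm_psiTerm_ratio_atTop (hq : ‖q‖ < 1) (ha : ∀ i, QFactorsNeZero (a i) q)
    (hb : ∀ i, QFactorsNeZero (b i) q) (hw : w ≠ 0) :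
    Tendsto (fun m : ℕ => ‖psiTerm a b q w (m + 1)‖ / ‖psiTerm a b q w m‖) atTop (𝓝 ‖w‖) := by
  have hfactor : ∀ c : ℂ, Tendsto (fun m : ℕ => 1 - c * q ^ m) atTop (𝓝 1) := fun c => by
    simpa using ((tendsto_pow_atTop_nhds_zero_of_norm_lt_one hq).const_mul c).const_sub 1
  have hlim : Tendsto (fun m : ℕ => (∏ i, (1 - a i * q ^ m)) / (∏ i, (1 - b i * q ^ m)) * w)
      atTop (𝓝 w) := by
    simpa using ((tendsto_finsetProd _ fun i _ => hfactor (a i)).div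
      (tendsto_finsetProd _ fun i _ => hfactor (b i)) (by simp)).mul_const w
  refine hlim.norm.congr fun m => ?_
  rw [psiTerm_add_one ha hb hw, zpow_natCast, norm_mul (psiTerm _ _ _ _ _),
    mul_div_cancel_left₀ _ (norm_ne_zero_iff.2 (psiTerm_ne_zero ha hb hw _))]

lemma tendsto_norm_psiTerm_ratio_neg_atTop (hq₀ : q ≠ 0) (hq : ‖q‖ < 1)
    (ha : ∀ i, QFactorsNeZero (a i) q) (hb : ∀ i, QFactorsNeZero (b i) q) (ha₀ : ∀ i, a i ≠ 0)
    (hw : w ≠ 0) :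
    Tendsto (fun m : ℕ => ‖psiTerm a b q w (-(m + 1))‖ / ‖psiTerm a b q w (-m)‖) atTop
      (𝓝 (‖∏ i, b i / a i‖ / ‖w‖)) := by
  have hfactor : ∀ c : ℂ, Tendsto (fun m : ℕ => q ^ (m + 1) - c) atTop (𝓝 (-c)) := fun c => by
    simpa using ((tendsto_add_atTop_iff_nat 1).2
      (tendsto_pow_atTop_nhds_zero_of_norm_lt_one hq)).sub_const c
  have hlim : Tendsto (fun m : ℕ => (∏ i, (q ^ (m + 1) - b i) / (q ^ (m + 1) - a i)) / w)
      atTop (𝓝 ((∏ i, b i / a i) / w)) := by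
    refine (tendsto_finsetProd _ fun i _ => ?_).div_const w
    have h := (hfactor (b i)).div (hfactor (a i)) (neg_ne_zero.2 (ha₀ i))
    rwa [neg_div_neg_eq] at h
  rw [← norm_div]
  refine hlim.norm.congr fun m => ?_
  have hstep := psiTerm_add_one ha hb hw (-(m + 1 : ℤ))
  rw [show -(m + 1 : ℤ) + 1 = -m by ring] at hstep
  have hfrac : ∀ c, 1 - c * q ^ (-(m + 1 : ℤ)) = (q ^ (m + 1) - c) / q ^ (m + 1) := fun c => by
    rw [zpow_neg, ← Nat.cast_succ, zpow_natCast]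
    field_simp
  rw [hstep, norm_mul, div_mul_cancel_left₀ (norm_ne_zero_iff.2 (psiTerm_ne_zero ha hb hw _)),
    ← norm_inv, mul_inv, inv_div, ← prod_div_distrib, div_eq_mul_inv]
  congr 2
  refine prod_congr rfl fun i _ => ?_
  rw [hfrac, hfrac, div_div_div_cancel_right₀ (pow_ne_zero _ hq₀)]

theorem summable_norm_psiTerm (hq₀ : q ≠ 0) (hq : ‖q‖ < 1) (ha : ∀ i, QFactorsNeZero (a i) q)
    (hb : ∀ i, QFactorsNeZero (b i) q) (ha₀ : ∀ i, a i ≠ 0) (hw₀ : w ≠ 0) (hw : ‖w‖ < 1)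
    (hab : ‖∏ i, b i / a i‖ < ‖w‖) :
    Summable fun k => ‖psiTerm a b q w k‖ :=
  summable_norm_int_of_ratio_tendsto (psiTerm_ne_zero ha hb hw₀) hw
    ((div_lt_one (norm_pos_iff.2 hw₀)).2 hab) (tendsto_norm_psiTerm_ratio_atTop hq ha hb hw₀)
    (tendsto_norm_psiTerm_ratio_neg_atTop hq₀ hq ha hb ha₀ hw₀)

end BilateralSeries

section Psi3

variable {q : ℝ} {g b c : ℂ}

noncomputable def psi3Upper (q : ℝ) (g b c : ℂ) (n : ℤ) : Fin 3 → ℂ :=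
  ![g * q, b * (q : ℂ) ^ n, g ^ 2 * (q : ℂ) ^ (-n) / c]

noncomputable def psi3Lower (q : ℝ) (g b c : ℂ) (n : ℤ) : Fin 3 → ℂ :=
  ![g, g ^ 2 * (q : ℂ) ^ (1 - n) / b, c * (q : ℂ) ^ (1 + n)]

lemma psi3Term_eq_psiTerm (n k : ℤ) (z : ℂ) :
    psi3Term q g b c n k z =
      psiTerm (psi3Upper q g b c n) (psi3Lower q g b c n) q (Real.sqrt q * z) k := by
  simp [psi3Term, psiTerm, psi3Upper, psi3Lower, Fin.prod_univ_three, mul_assoc]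

lemma prod_psi3Lower_div_psi3Upper (hq : q ≠ 0) (hg : g ≠ 0) (hb : b ≠ 0) (hc : c ≠ 0) (n : ℤ) :
    ∏ i, psi3Lower q g b c n i / psi3Upper q g b c n i = q * (c / b) ^ 2 := by
  have hq' : (q : ℂ) ≠ 0 := Complex.ofReal_ne_zero.2 hq
  simp only [psi3Lower, psi3Upper, Fin.prod_univ_three, Matrix.cons_val_zero, Matrix.cons_val_one,
    Matrix.cons_val_two, Matrix.head_cons, Matrix.tail_cons]
  rw [zpow_sub₀ hq', zpow_add₀ hq', zpow_neg, zpow_one]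
  field_simp

theorem summable_norm_psi3Term (hq₀ : 0 < q) (hq₁ : q < 1) (hg : g ≠ 0) (hb : b ≠ 0) (hc : c ≠ 0)
    (hcb : ‖c‖ = ‖b‖) (hgf : QFactorsNeZero g q) (hbf : QFactorsNeZero b q)
    (hcf : QFactorsNeZero c q) (hgcf : QFactorsNeZero (g ^ 2 / c) q)
    (hgbf : QFactorsNeZero (g ^ 2 / b) q) (n : ℤ) {z : ℂ} (hz : ‖z‖ = 1) :
    Summable fun k => ‖psi3Term q g b c n k z‖ := by
  have hq : (q : ℂ) ≠ 0 := Complex.ofReal_ne_zero.2 hq₀.ne'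
  have hw : ‖(Real.sqrt q : ℂ) * z‖ = Real.sqrt q := by
    rw [norm_mul, hz, mul_one, Complex.norm_real, Real.norm_of_nonneg (Real.sqrt_nonneg q)]
  simp_rw [psi3Term_eq_psiTerm]
  refine summable_norm_psiTerm hq ?_ ?_ ?_ ?_ ?_ ?_ ?_
  · rwa [Complex.norm_real, Real.norm_of_nonneg hq₀.le]
  · intro i
    fin_cases i
    · simpa [psi3Upper] using hgf.mul_zpow hq 1
    · exact hbf.mul_zpow hq n
    · convert hgcf.mul_zpow hq (-n) using 1
      simp only [psi3Upper, Fin.reduceFinMk, Matrix.cons_val]; ring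
  · intro i
    fin_cases i
    · exact hgf
    · convert hgbf.mul_zpow hq (1 - n) using 1
      simp only [psi3Lower, Fin.mk_one, Matrix.cons_val_one, Matrix.cons_val_zero]; ring
    · exact hcf.mul_zpow hq (1 + n)
  · intro i
    fin_cases i <;> simp [psi3Upper, hg, hb, hc, hq, zpow_ne_zero _ hq]
  · rw [← norm_ne_zero_iff, hw]
    positivity
  · rw [hw, Real.sqrt_lt' one_pos]
    linarith
  · rw [prod_psi3Lower_div_psi3Upper hq₀.ne' hg hb hc, hw, norm_mul, norm_pow, norm_div, hcb,
      div_self (norm_ne_zero_iff.2 hb), one_pow, mul_one, Complex.norm_real,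
      Real.norm_of_nonneg hq₀.le]
    exact Real.lt_sqrt_self_iff.2 ⟨hq₀.ne', hq₁⟩

theorem Fnk_mul_zpow_eq_mul_psi3Term (hq : q ≠ 0) (hg : g ≠ 0) (hb : b ≠ 0) (hc : c ≠ 0)
    (h1g : 1 - g ≠ 0) (hgf : QFactorsNeZero g q) (hbf : QFactorsNeZero b q)
    (hcf : QFactorsNeZero c q) (hgcf : QFactorsNeZero (g ^ 2 / c) q)
    (hgbf : QFactorsNeZero (g ^ 2 / b) q) {n : ℤ} (hcqg : qPoch (c * q / g ^ 2) q n ≠ 0) (k : ℤ) (z : ℂ) :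
    Fnk q g b c n k * z ^ k =
      qPoch b q n * qPoch (b / g ^ 2) q n / (qPoch (c * q) q n * qPoch (c * q / g ^ 2) q n) *
        (c * q / b) ^ n * psi3Term q g b c n k z := by
  rw [Fnk, psi3Term]
  set Q : ℂ := (q : ℂ)
  have hQ : Q ≠ 0 := Complex.ofReal_ne_zero.2 hq
  have hcQf : QFactorsNeZero (c * Q) Q := by simpa using hcf.mul_zpow hQ 1
  have hgbQf : QFactorsNeZero (g ^ 2 * Q / b) Q := by
    convert hgbf.mul_zpow hQ 1 using 1; rw [zpow_one]; ring
  have hB : qPoch b Q (n + k) = qPoch b Q n * qPoch (b * Q ^ n) Q k := qPoch_add hQ hbf n k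
  have hC : qPoch (c * Q) Q (n + k) = qPoch (c * Q) Q n * qPoch (c * Q ^ (1 + n)) Q k := by
    rw [qPoch_add hQ hcQf, mul_assoc, ← zpow_one_add₀ hQ]
  have hG : qPoch (g ^ 2 / c) Q (k - n) =
      qPoch (g ^ 2 / c) Q (-n) * qPoch (g ^ 2 * Q ^ (-n) / c) Q k := by
    rw [sub_eq_neg_add, qPoch_add hQ hgcf, div_mul_eq_mul_div]
  have hH : qPoch (g ^ 2 * Q / b) Q (k - n) =
      qPoch (g ^ 2 * Q / b) Q (-n) * qPoch (g ^ 2 * Q ^ (1 - n) / b) Q k := by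
    rw [sub_eq_neg_add, qPoch_add hQ hgbQf, sub_eq_add_neg 1 n, zpow_add₀ hQ, zpow_one]
    ring_nf
  have hgQ : qPoch (g * Q) Q k = qPoch g Q k * (1 - g * Q ^ k) / (1 - g) := by
    rw [eq_div_iff h1g, ← one_sub_mul_qPoch_mul hQ hgf, mul_comm]
  have hrefl := qPoch_neg_eq_mul_div hQ hgcf hgbQf (a' := c * Q / g ^ 2) (b' := b / g ^ 2)
    (by field_simp) (by field_simp) hcqg
  rw [show g ^ 2 * Q / b / (g ^ 2 / c) = c * Q / b by field_simp] at hrefl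
  have hHn : qPoch (g ^ 2 * Q / b) Q (-n) ≠ 0 := qPoch_ne_zero_iff.2 hgbQf _
  have hGk : qPoch g Q k ≠ 0 := qPoch_ne_zero_iff.2 hgf _
  have hCn : qPoch (c * Q) Q n ≠ 0 := qPoch_ne_zero_iff.2 hcQf _
  have hCk : qPoch (c * Q ^ (1 + n)) Q k ≠ 0 := qPoch_ne_zero_iff.2 (hcf.mul_zpow hQ _) _
  have hHk : qPoch (g ^ 2 * Q ^ (1 - n) / b) Q k ≠ 0 := by
    refine qPoch_ne_zero_iff.2 ?_ _
    convert hgbf.mul_zpow hQ (1 - n) using 1; ring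
  rw [hB, hC, hG, hH, hgQ, hrefl, mul_zpow]
  field_simp

end Psi3

theorem Fn_eq_3psi3_general (q : ℝ) (hq0 : 0 < q) (hq1 : q < 1)
    (g b c : ℂ) (hg : g ≠ 0) (hgre : g.re = 0) (hb : b ≠ 0) (hc : c = (starRingEnd ℂ) b)
    (h1g : 1 - g ≠ 0)
    (hd1 : ∀ m : ℤ, qPoch (c * (q : ℂ)) (q : ℂ) m ≠ 0)
    (hd2 : ∀ m : ℤ, qPoch (g ^ 2 * (q : ℂ) / b) (q : ℂ) m ≠ 0)
    (hd3 : ∀ k : ℤ, qPoch g (q : ℂ) k ≠ 0)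
    (hd6 : ∀ n : ℤ, qPoch (c * (q : ℂ) / g ^ 2) (q : ℂ) n ≠ 0) :
    ∀ n : ℤ, ∀ z : ℂ, ‖z‖ = 1 →
      (Summable fun k : ℤ => ‖psi3Term q g b c n k z‖) ∧
      Fq q g b c n z =
        qPoch b (q : ℂ) n * qPoch (b / g ^ 2) (q : ℂ) n /
            (qPoch (c * (q : ℂ)) (q : ℂ) n * qPoch (c * (q : ℂ) / g ^ 2) (q : ℂ) n) *
          (c * (q : ℂ) / b) ^ n * ∑' k : ℤ, psi3Term q g b c n k z := by
  intro n z hz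
  have hq : (q : ℂ) ≠ 0 := Complex.ofReal_ne_zero.2 hq0.ne'
  have hc0 : c ≠ 0 := hc ▸ (map_ne_zero _).2 hb
  have hcb : ‖c‖ = ‖b‖ := hc ▸ Complex.norm_conj b
  have hg_conj : starRingEnd ℂ g = -g := Complex.ext (by simp [hgre]) (by simp)
  have hgf := qPoch_ne_zero_iff.1 hd3
  have hcf := (qPoch_ne_zero_iff.1 hd1).of_mul hq
  have hgbf : QFactorsNeZero (g ^ 2 / b) q :=
    .of_mul hq (by simpa only [mul_div_right_comm] using qPoch_ne_zero_iff.1 hd2)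
  have hbf : QFactorsNeZero b q := by simpa [hc] using hcf.conj
  have hgcf : QFactorsNeZero (g ^ 2 / c) q := by simpa [hc, hg_conj] using hgbf.conj
  refine ⟨summable_norm_psi3Term hq0 hq1 hg hb hc0 hcb hgf hbf hcf hgcf hgbf n hz, ?_⟩
  rw [Fq, ← tsum_mul_left]
  exact tsum_congr
    (Fnk_mul_zpow_eq_mul_psi3Term hq0.ne' hg hb hc0 h1g hgf hbf hcf hgcf hgbf (hd6 n) · z)

/-- Representation of `F_n` as a multiple of a well-poised bilateral `₃ψ₃` series,
the series converging absolutely on the unit circle. -/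
theorem Fn_eq_3psi3 (q : ℝ) (hq0 : 0 < q) (hq1 : q < 1)
    (g b c : ℂ) (hg : g ≠ 0) (hgre : g.re = 0) (hb : b ≠ 0) (hc : c = (starRingEnd ℂ) b)
    (h1g : 1 - g ≠ 0)
    (hd1 : ∀ m : ℤ, qPoch (c * (q : ℂ)) (q : ℂ) m ≠ 0)
    (hd2 : ∀ m : ℤ, qPoch (g ^ 2 * (q : ℂ) / b) (q : ℂ) m ≠ 0)
    (hd3 : ∀ k : ℤ, qPoch g (q : ℂ) k ≠ 0)
    (hd4 : ∀ n k : ℤ, qPoch (g ^ 2 * (q : ℂ) ^ (1 - n) / b) (q : ℂ) k ≠ 0)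
    (hd5 : ∀ n k : ℤ, qPoch (c * (q : ℂ) ^ (1 + n)) (q : ℂ) k ≠ 0)
    (hd6 : ∀ n : ℤ, qPoch (c * (q : ℂ) / g ^ 2) (q : ℂ) n ≠ 0) :
    ∀ n : ℤ, ∀ z : ℂ, ‖z‖ = 1 →
      (Summable fun k : ℤ => ‖psi3Term q g b c n k z‖) ∧
      Fq q g b c n z =
        qPoch b (q : ℂ) n * qPoch (b / g ^ 2) (q : ℂ) n /
            (qPoch (c * (q : ℂ)) (q : ℂ) n * qPoch (c * (q : ℂ) / g ^ 2) (q : ℂ) n) *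
          (c * (q : ℂ) / b) ^ n * ∑' k : ℤ, psi3Term q g b c n k z :=
  Fn_eq_3psi3_general q hq0 hq1 g b c hg hgre hb hc h1g hd1 hd2 hd3 hd6
end
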